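/- (Lemma 3.1, reduced form.) Let c ∈ (0,√2), p ∈ (0,1) with p > p₀, and let k ∈ ℕ, k ≥ 1, be such that κ₂/κ₁ < k. Then the set { θ ∈ ℝ : θ < θ₂, θ ≠ θ₁, and L(c,p,θ) = m for some positive integer m } is finite and has at most 2·(⌈k/2⌉ − 1) elements. (Each such θ corresponds to an even one-troughed travelling wave solution of the beam problem u_ττ + u_xxxx + au⁺ − bu⁻ = 1; hence there are at most 2·(⌈k/2⌉ − 1) such waves.) -/

import Mathlib

open Real Filter Set

/-- `ξ = p c⁴ / 4`. -/
noncomputable def xiPar (c p : ℝ) : ℝ := p * c ^ 4 / 4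

/-- `κ₁ = √((c² − √(c⁴ − 4ξ))/2)`. -/
noncomputable def kappa1 (c p : ℝ) : ℝ :=
  Real.sqrt ((c ^ 2 - Real.sqrt (c ^ 4 - 4 * xiPar c p)) / 2)

/-- `κ₂ = √((c² + √(c⁴ − 4ξ))/2)`. -/
noncomputable def kappa2 (c p : ℝ) : ℝ :=
  Real.sqrt ((c ^ 2 + Real.sqrt (c ^ 4 - 4 * xiPar c p)) / 2)

/-- The function `L(c,p,θ)` from the paper. -/
noncomputable def Lfun (c p θ : ℝ) : ℝ :=
  (1 / 2) * (1 + kappa2 c p / kappa1 c p)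
  + (1 / Real.pi) * Real.arctan
      ((kappa2 c p * (-(kappa1 c p) ^ 2 + xiPar c p + xiPar c p * θ * Real.sqrt (2 - c ^ 2))) /
       (xiPar c p * (θ * (kappa1 c p) ^ 2 + Real.sqrt (2 - c ^ 2) + θ * (1 - c ^ 2))))
  - (kappa2 c p / (kappa1 c p * Real.pi)) * Real.arctan
      ((kappa1 c p * (-(kappa2 c p) ^ 2 + xiPar c p + xiPar c p * θ * Real.sqrt (2 - c ^ 2))) /
       (xiPar c p * (θ * (kappa2 c p) ^ 2 + Real.sqrt (2 - c ^ 2) + θ * (1 - c ^ 2))))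

/-- The discontinuity point `θ₁ = −2√(2−c²)/(2−c² − c²√(1−p))`. -/
noncomputable def theta1 (c p : ℝ) : ℝ :=
  -2 * Real.sqrt (2 - c ^ 2) / (2 - c ^ 2 - c ^ 2 * Real.sqrt (1 - p))

/-- The discontinuity point `θ₂ = −2√(2−c²)/(2−c² + c²√(1−p))`. -/
noncomputable def theta2 (c p : ℝ) : ℝ :=
  -2 * Real.sqrt (2 - c ^ 2) / (2 - c ^ 2 + c ^ 2 * Real.sqrt (1 - p))

/-- The threshold `p₀ = 4(c²−1)/c⁴`. -/
noncomputable def p0 (c : ℝ) : ℝ := 4 * (c ^ 2 - 1) / c ^ 4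

/-!
With `Cᵢ = (1 - κᵢ²) / (κᵢ √(2 - c²))`, each arctan argument in `L` has the form
`(x - C) / (1 + x C)` with `x = κᵢ θ`, so by the addition formula it equals
`arctan (κᵢ θ) - arctan Cᵢ`, plus `π` on the side of the pole `κᵢ θ Cᵢ = -1` where
`1 + κᵢ θ Cᵢ < 0`; the two poles are `θ₁` and `θ₂`. Hence on `(-∞, θ₁)` and on `(θ₁, θ₂)` the
function `L` is a constant plus `(arctan (κ₂ θ) - (κ₂/κ₁) arctan (κ₁ θ)) / π`, which is strictly
decreasing for `θ ≤ 0`. Evaluating the continuous branch at `θ₁` gives `1 < L < 1 + κ₂/(2κ₁)`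
on the first interval and `L < κ₂/(2κ₁)` on the second, so each interval contains at most
`(k - 1) / 2` solutions of `L = m` with `m` a positive integer.
-/

lemma arctan_sub_div_one_add_mul_of_pos {x y : ℝ} (h : 0 < 1 + x * y) :
    arctan ((x - y) / (1 + x * y)) = arctan x - arctan y := by
  rw [sub_eq_add_neg (arctan x), ← arctan_neg, arctan_add (by linarith)]
  ring_nf

lemma arctan_sub_div_one_add_mul_of_neg {x y : ℝ} (hy : 0 < y) (h : 1 + x * y < 0) :
    arctan ((x - y) / (1 + x * y)) = arctan x - arctan y + π := by
  have hx : x < 0 := by nlinarith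
  rw [sub_eq_add_neg (arctan x), ← arctan_neg, arctan_add_eq_sub_pi (by linarith) hx]
  ring_nf

lemma arctan_sub_pi_div_two {y : ℝ} (hy : 0 < y) : arctan y - π / 2 = arctan (-y⁻¹) := by
  rw [arctan_neg, arctan_inv_of_pos hy]; ring

lemma arctan_sub_arctan_lt_neg_pi_div_two_iff {x y : ℝ} (hy : 0 < y) :
    arctan x - arctan y < -(π / 2) ↔ x * y < -1 := by
  calc arctan x - arctan y < -(π / 2) ↔ arctan x < arctan (-y⁻¹) := by
        rw [← arctan_sub_pi_div_two hy]; constructor <;> intro h <;> linarith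
    _ ↔ x < -y⁻¹ := arctan_strictMono.lt_iff_lt
    _ ↔ x * y < -1 := by rw [← one_div, ← neg_div, lt_div_iff₀ hy]

lemma arctan_sub_arctan_le_neg_pi_div_two_iff {x y : ℝ} (hy : 0 < y) :
    arctan x - arctan y ≤ -(π / 2) ↔ x * y ≤ -1 := by
  calc arctan x - arctan y ≤ -(π / 2) ↔ arctan x ≤ arctan (-y⁻¹) := by
        rw [← arctan_sub_pi_div_two hy]; constructor <;> intro h <;> linarith
    _ ↔ x ≤ -y⁻¹ := arctan_strictMono.le_iff_le
    _ ↔ x * y ≤ -1 := by rw [← one_div, ← neg_div, le_div_iff₀ hy]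

lemma neg_pi_lt_arctan_sub_arctan (x y : ℝ) : -π < arctan x - arctan y := by
  linarith [neg_pi_div_two_lt_arctan x, arctan_lt_pi_div_two y]

lemma strictAntiOn_arctan_mul_sub_div_mul_arctan_mul {a b : ℝ} (ha : 0 < a) (hab : a < b) :
    StrictAntiOn (fun θ => arctan (b * θ) - b / a * arctan (a * θ)) (Iic 0) := by
  have hderiv (θ : ℝ) : HasDerivAt (fun θ => arctan (b * θ) - b / a * arctan (a * θ))
      (b / (1 + (b * θ) ^ 2) - b / (1 + (a * θ) ^ 2)) θ := by
    have hb := ((hasDerivAt_id θ).const_mul b).arctan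
    have ha' := (((hasDerivAt_id θ).const_mul a).arctan).const_mul (b / a)
    refine (hb.sub ha').congr_deriv ?_
    simp only [id]
    field_simp
  refine strictAntiOn_of_deriv_neg (convex_Iic 0)
    (fun θ _ => (hderiv θ).continuousAt.continuousWithinAt) fun θ hθ => ?_
  rw [interior_Iic, mem_Iio] at hθ
  rw [(hderiv θ).deriv, sub_neg]
  refine div_lt_div_of_pos_left (by linarith) (by positivity) ?_
  have : a ^ 2 < b ^ 2 := by gcongr
  nlinarith [mul_pos (sub_pos.2 this) (pow_pos (neg_pos.2 hθ) 2)]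

lemma Set.InjOn.finite_and_ncard_le_of_natCast_mem_Ioo {α : Type*} {f : α → ℝ} {T : Set α}
    (hf : InjOn f T) (j k : ℕ)
    (hT : ∀ x ∈ T, ∃ m : ℕ, f x = m ∧ (j : ℝ) < m ∧ (m : ℝ) < j + k / 2) :
    T.Finite ∧ T.ncard ≤ (k - 1) / 2 := by
  set A : Set ℝ := Nat.cast '' (Finset.Ioc j (j + (k - 1) / 2) : Set ℕ)
  have hA : A.Finite := (Finset.finite_toSet _).image _
  have hmaps : MapsTo f T A := by
    intro x hx
    obtain ⟨m, hfx, hjm, hmk⟩ := hT x hx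
    have hjm : j < m := by exact_mod_cast hjm
    have hmk : 2 * m < 2 * j + k := by
      have : ((2 * m : ℕ) : ℝ) < ((2 * j + k : ℕ) : ℝ) := by push_cast; linarith
      exact_mod_cast this
    exact ⟨m, by simp only [Finset.coe_Ioc, mem_Ioc]; omega, hfx.symm⟩
  refine ⟨Set.Finite.of_injOn hmaps hf hA, ?_⟩
  calc T.ncard ≤ A.ncard := Set.ncard_le_ncard_of_injOn f hmaps hf hA
    _ ≤ (Finset.Ioc j (j + (k - 1) / 2) : Set ℕ).ncard := Set.ncard_image_le (Finset.finite_toSet _)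
    _ = (k - 1) / 2 := by rw [Set.ncard_coe_finset, Nat.card_Ioc]; omega

noncomputable def Lmodel (a b C₁ C₂ θ : ℝ) : ℝ :=
  (1 / 2) * (1 + b / a) + (1 / π) * arctan ((b * θ - C₂) / (1 + b * θ * C₂))
  - (b / (a * π)) * arctan ((a * θ - C₁) / (1 + a * θ * C₁))

noncomputable def Lbranch (a b C₁ C₂ θ : ℝ) : ℝ :=
  (1 / 2) * (1 + b / a) + (1 / π) * (arctan (b * θ) - arctan C₂ + π)
  - (b / (a * π)) * (arctan (a * θ) - arctan C₁ + π)

section Model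

variable {a b C₁ C₂ t₁ t₂ : ℝ}

lemma strictAntiOn_Lbranch (ha : 0 < a) (hab : a < b) :
    StrictAntiOn (Lbranch a b C₁ C₂) (Iic 0) := by
  intro x hx y hy hxy
  have h := strictAntiOn_arctan_mul_sub_div_mul_arctan_mul ha hab hx hy hxy
  have hdiff : Lbranch a b C₁ C₂ y - Lbranch a b C₁ C₂ x =
      ((arctan (b * y) - b / a * arctan (a * y)) -
        (arctan (b * x) - b / a * arctan (a * x))) / π := by
    unfold Lbranch; ring
  have : Lbranch a b C₁ C₂ y - Lbranch a b C₁ C₂ x < 0 := by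
    rw [hdiff]; exact div_neg_of_neg_of_pos (by linarith) pi_pos
  linarith

lemma Lbranch_lt {θ : ℝ} (ha : 0 < a) (hb : 0 < b) (hC₂ : 0 < C₂) (h₂ : b * θ * C₂ ≤ -1) :
    Lbranch a b C₁ C₂ θ < 1 + b / a / 2 := by
  have hψ₂ := (arctan_sub_arctan_le_neg_pi_div_two_iff (x := b * θ) hC₂).2 h₂
  have hψ₁ := neg_pi_lt_arctan_sub_arctan (a * θ) C₁
  have hdiff : 1 + b / a / 2 - Lbranch a b C₁ C₂ θ =
      (-(arctan (b * θ) - arctan C₂ + π / 2) + b / a * (arctan (a * θ) - arctan C₁ + π)) / π := by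
    unfold Lbranch; field_simp; ring
  have : 0 < 1 + b / a / 2 - Lbranch a b C₁ C₂ θ := by
    rw [hdiff]
    have : 0 < b / a * (arctan (a * θ) - arctan C₁ + π) := mul_pos (by positivity) (by linarith)
    exact div_pos (by linarith) pi_pos
  linarith

lemma one_lt_Lbranch {θ : ℝ} (ha : 0 < a) (hb : 0 < b) (hC₁ : 0 < C₁) (hC₂ : 0 < C₂)
    (h₁ : a * θ * C₁ < -1) (h₂ : -1 ≤ b * θ * C₂) : 1 < Lbranch a b C₁ C₂ θ := by
  have hψ₁ := (arctan_sub_arctan_lt_neg_pi_div_two_iff (x := a * θ) hC₁).2 h₁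
  have hψ₂ := (arctan_sub_arctan_lt_neg_pi_div_two_iff (x := b * θ) hC₂).not.2 h₂.not_gt
  have hdiff : Lbranch a b C₁ C₂ θ - 1 =
      ((arctan (b * θ) - arctan C₂ + π / 2) -
        b / a * (arctan (a * θ) - arctan C₁ + π / 2)) / π := by
    unfold Lbranch; field_simp; ring
  have : 0 < Lbranch a b C₁ C₂ θ - 1 := by
    rw [hdiff]
    have : b / a * (arctan (a * θ) - arctan C₁ + π / 2) < 0 :=
      mul_neg_of_pos_of_neg (by positivity) (by linarith)
    exact div_pos (by linarith) pi_pos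
  linarith

lemma eqOn_Lmodel_Lbranch (ha : 0 < a) (hb : 0 < b) (hC₁ : 0 < C₁) (hC₂ : 0 < C₂)
    (ht₁ : b * C₂ * t₁ = -1) (ht₂ : a * C₁ * t₂ = -1) (ht : t₁ < t₂) :
    EqOn (Lmodel a b C₁ C₂) (Lbranch a b C₁ C₂) (Iio t₁) := fun θ (hθ : θ < t₁) => by
  have := mul_pos ha hC₁
  have := mul_pos hb hC₂
  rw [Lmodel, arctan_sub_div_one_add_mul_of_neg hC₁ (by nlinarith),
    arctan_sub_div_one_add_mul_of_neg hC₂ (by nlinarith), Lbranch]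

lemma eqOn_Lmodel_Lbranch_sub_one (ha : 0 < a) (hb : 0 < b) (hC₁ : 0 < C₁) (hC₂ : 0 < C₂)
    (ht₁ : b * C₂ * t₁ = -1) (ht₂ : a * C₁ * t₂ = -1) :
    EqOn (Lmodel a b C₁ C₂) (Lbranch a b C₁ C₂ · - 1) (Ioo t₁ t₂) := fun θ ⟨hθ₁, hθ₂⟩ => by
  dsimp only
  have := mul_pos ha hC₁
  have := mul_pos hb hC₂
  rw [Lmodel, arctan_sub_div_one_add_mul_of_neg hC₁ (by nlinarith),
    arctan_sub_div_one_add_mul_of_pos (by nlinarith), Lbranch]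
  field_simp
  ring

lemma Lmodel_mem_Ioo_of_lt {θ : ℝ} (ha : 0 < a) (hab : a < b) (hC₁ : 0 < C₁) (hC₂ : 0 < C₂)
    (ht₁ : b * C₂ * t₁ = -1) (ht₂ : a * C₁ * t₂ = -1) (ht : t₁ < t₂) (hθ : θ < t₁) :
    Lmodel a b C₁ C₂ θ ∈ Ioo 1 (1 + b / a / 2) := by
  have hb : 0 < b := ha.trans hab
  have haC := mul_pos ha hC₁
  have hbC := mul_pos hb hC₂
  have ht₂₀ : t₂ < 0 := neg_of_mul_neg_right (ht₂ ▸ neg_one_lt_zero) haC.le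
  rw [eqOn_Lmodel_Lbranch ha hb hC₁ hC₂ ht₁ ht₂ ht hθ]
  refine ⟨?_, Lbranch_lt ha hb hC₂ (by nlinarith)⟩
  calc 1 < Lbranch a b C₁ C₂ t₁ := one_lt_Lbranch ha hb hC₁ hC₂ (by nlinarith) (by linarith)
    _ < Lbranch a b C₁ C₂ θ := strictAntiOn_Lbranch ha hab
      (mem_Iic.2 (by linarith)) (mem_Iic.2 (by linarith)) hθ

lemma Lmodel_lt_of_mem_Ioo {θ : ℝ} (ha : 0 < a) (hab : a < b) (hC₁ : 0 < C₁) (hC₂ : 0 < C₂)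
    (ht₁ : b * C₂ * t₁ = -1) (ht₂ : a * C₁ * t₂ = -1) (hθ : θ ∈ Ioo t₁ t₂) :
    Lmodel a b C₁ C₂ θ < b / a / 2 := by
  have hb : 0 < b := ha.trans hab
  have ht₂₀ : t₂ < 0 := neg_of_mul_neg_right (ht₂ ▸ neg_one_lt_zero) (mul_pos ha hC₁).le
  rw [eqOn_Lmodel_Lbranch_sub_one ha hb hC₁ hC₂ ht₁ ht₂ hθ]
  have := strictAntiOn_Lbranch (C₁ := C₁) (C₂ := C₂) ha hab
    (mem_Iic.2 (by linarith [hθ.1, hθ.2])) (mem_Iic.2 (by linarith [hθ.2])) hθ.1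
  linarith [Lbranch_lt (C₁ := C₁) ha hb hC₂ (by linarith : b * t₁ * C₂ ≤ -1)]

lemma strictAntiOn_Lmodel_Iio (ha : 0 < a) (hab : a < b) (hC₁ : 0 < C₁) (hC₂ : 0 < C₂)
    (ht₁ : b * C₂ * t₁ = -1) (ht₂ : a * C₁ * t₂ = -1) (ht : t₁ < t₂) :
    StrictAntiOn (Lmodel a b C₁ C₂) (Iio t₁) := by
  have ht₂₀ : t₂ < 0 := neg_of_mul_neg_right (ht₂ ▸ neg_one_lt_zero) (mul_pos ha hC₁).le
  refine ((strictAntiOn_Lbranch ha hab).mono fun θ (hθ : θ < t₁) => mem_Iic.2 (by linarith)).congr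
    (eqOn_Lmodel_Lbranch ha (ha.trans hab) hC₁ hC₂ ht₁ ht₂ ht).symm

lemma strictAntiOn_Lmodel_Ioo (ha : 0 < a) (hab : a < b) (hC₁ : 0 < C₁) (hC₂ : 0 < C₂)
    (ht₁ : b * C₂ * t₁ = -1) (ht₂ : a * C₁ * t₂ = -1) :
    StrictAntiOn (Lmodel a b C₁ C₂) (Ioo t₁ t₂) := by
  have ht₂₀ : t₂ < 0 := neg_of_mul_neg_right (ht₂ ▸ neg_one_lt_zero) (mul_pos ha hC₁).le
  have hanti : StrictAntiOn (Lbranch a b C₁ C₂ · - 1) (Ioo t₁ t₂) := fun x hx y hy hxy =>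
    sub_lt_sub_right (strictAntiOn_Lbranch ha hab (mem_Iic.2 (by linarith [hx.2]))
      (mem_Iic.2 (by linarith [hy.2])) hxy) 1
  exact hanti.congr (eqOn_Lmodel_Lbranch_sub_one ha (ha.trans hab) hC₁ hC₂ ht₁ ht₂).symm

theorem Lmodel_finite_and_ncard_le (ha : 0 < a) (hab : a < b) (hC₁ : 0 < C₁) (hC₂ : 0 < C₂)
    (ht₁ : b * C₂ * t₁ = -1) (ht₂ : a * C₁ * t₂ = -1) (ht : t₁ < t₂) (k : ℕ) (hr : b / a < k)
    {S : Set ℝ} (hS : ∀ θ ∈ S, θ < t₂ ∧ θ ≠ t₁ ∧ ∃ m : ℕ, 0 < m ∧ Lmodel a b C₁ C₂ θ = m) :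
    S.Finite ∧ S.ncard ≤ 2 * ((k - 1) / 2) := by
  have hsplit : S = S ∩ Iio t₁ ∪ S ∩ Ioo t₁ t₂ := by
    rw [← inter_union_distrib_left, eq_comm, inter_eq_left]
    intro θ hθ
    obtain ⟨hθ₂, hθ₁, -⟩ := hS θ hθ
    exact hθ₁.lt_or_gt.imp id fun h => ⟨h, hθ₂⟩
  obtain ⟨hfin₁, hcard₁⟩ := ((strictAntiOn_Lmodel_Iio ha hab hC₁ hC₂ ht₁ ht₂ ht).injOn.mono
      inter_subset_right).finite_and_ncard_le_of_natCast_mem_Ioo 1 k <| by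
    rintro θ ⟨hθS, hθ⟩
    obtain ⟨-, -, m, -, hm⟩ := hS θ hθS
    have := Lmodel_mem_Ioo_of_lt ha hab hC₁ hC₂ ht₁ ht₂ ht hθ
    rw [hm] at this
    exact ⟨m, hm, by exact_mod_cast this.1, by push_cast; linarith [this.2]⟩
  obtain ⟨hfin₂, hcard₂⟩ := ((strictAntiOn_Lmodel_Ioo ha hab hC₁ hC₂ ht₁ ht₂).injOn.mono
      inter_subset_right).finite_and_ncard_le_of_natCast_mem_Ioo 0 k <| by
    rintro θ ⟨hθS, hθ⟩
    obtain ⟨-, -, m, hm₀, hm⟩ := hS θ hθS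
    have := Lmodel_lt_of_mem_Ioo ha hab hC₁ hC₂ ht₁ ht₂ hθ
    rw [hm] at this
    exact ⟨m, hm, by exact_mod_cast hm₀, by push_cast; linarith⟩
  rw [hsplit]
  exact ⟨hfin₁.union hfin₂, (ncard_union_le _ _).trans (by omega)⟩

end Model

section Parameters

variable {c p : ℝ}

lemma sqrt_sub_four_mul_xiPar :
    √(c ^ 4 - 4 * xiPar c p) = c ^ 2 * √(1 - p) := by
  rw [xiPar, show c ^ 4 - 4 * (p * c ^ 4 / 4) = (c ^ 2) ^ 2 * (1 - p) by ring,
    Real.sqrt_mul (by positivity), Real.sqrt_sq (by positivity)]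

lemma kappa1_sq (hp₀ : 0 ≤ p) : kappa1 c p ^ 2 = c ^ 2 * (1 - √(1 - p)) / 2 := by
  have : √(1 - p) ≤ 1 := Real.sqrt_le_one.2 (by linarith)
  rw [kappa1, sqrt_sub_four_mul_xiPar, Real.sq_sqrt (by nlinarith [sq_nonneg c])]
  ring

lemma kappa2_sq : kappa2 c p ^ 2 = c ^ 2 * (1 + √(1 - p)) / 2 := by
  rw [kappa2, sqrt_sub_four_mul_xiPar, Real.sq_sqrt (by positivity)]
  ring

lemma kappa1_sq_add_kappa2_sq (hp₀ : 0 ≤ p) :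
    kappa1 c p ^ 2 + kappa2 c p ^ 2 = c ^ 2 := by
  rw [kappa1_sq hp₀, kappa2_sq]; ring

lemma xiPar_eq_kappa1_sq_mul_kappa2_sq (hp₀ : 0 ≤ p) (hp : p ≤ 1) :
    xiPar c p = kappa1 c p ^ 2 * kappa2 c p ^ 2 := by
  rw [kappa1_sq hp₀, kappa2_sq, xiPar]
  linear_combination (c ^ 4 / 4) * Real.sq_sqrt (show 0 ≤ 1 - p by linarith)

lemma kappa2_pos (hc : c ≠ 0) : 0 < kappa2 c p := by
  rw [kappa2, Real.sqrt_pos, sqrt_sub_four_mul_xiPar]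
  have : 0 < c ^ 2 := by positivity
  positivity

lemma kappa1_pos (hc : c ≠ 0) (hp₀ : 0 < p) : 0 < kappa1 c p := by
  have : √(1 - p) < 1 := (Real.sqrt_lt' one_pos).2 (by linarith)
  have : 0 < c ^ 2 := by positivity
  rw [kappa1, Real.sqrt_pos, sqrt_sub_four_mul_xiPar]
  nlinarith

lemma kappa1_lt_kappa2 (hc : c ≠ 0) (hp₀ : 0 ≤ p) (hp : p < 1) : kappa1 c p < kappa2 c p := by
  refine lt_of_pow_lt_pow_left₀ 2 (Real.sqrt_nonneg _) ?_
  rw [kappa1_sq hp₀, kappa2_sq]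
  have : 0 < √(1 - p) := Real.sqrt_pos.2 (by linarith)
  have : 0 < c ^ 2 := by positivity
  nlinarith

lemma kappa2_lt_one (hc : c ≠ 0) (hc2 : c ^ 2 < 2) (hp : p ≤ 1) (hpp : p0 c < p) :
    kappa2 c p < 1 := by
  refine lt_of_pow_lt_pow_left₀ 2 zero_le_one ?_
  rw [kappa2_sq, one_pow]
  have hq := Real.sq_sqrt (show 0 ≤ 1 - p by linarith)
  have hq₀ := Real.sqrt_nonneg (1 - p)
  have hc4 : 0 < c ^ 4 := by positivity
  rw [p0, div_lt_iff₀ hc4] at hpp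
  -- with `q = √(1 - p)`: `(c²(1+q) - 2)(c²(1-q) - 2) = p c⁴ - 4c² + 4 > 0`, and the second
  -- factor is negative
  nlinarith [mul_nonneg (sq_nonneg c) hq₀]

lemma theta1_eq : theta1 c p = -√(2 - c ^ 2) / (1 - kappa2 c p ^ 2) := by
  rw [theta1, kappa2_sq,
    show 2 - c ^ 2 - c ^ 2 * √(1 - p) = 2 * (1 - c ^ 2 * (1 + √(1 - p)) / 2) by ring,
    neg_mul, neg_div, neg_div, mul_div_mul_left _ _ two_ne_zero]

lemma theta2_eq (hp₀ : 0 ≤ p) : theta2 c p = -√(2 - c ^ 2) / (1 - kappa1 c p ^ 2) := by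
  rw [theta2, kappa1_sq hp₀,
    show 2 - c ^ 2 + c ^ 2 * √(1 - p) = 2 * (1 - c ^ 2 * (1 - √(1 - p)) / 2) by ring,
    neg_mul, neg_div, neg_div, mul_div_mul_left _ _ two_ne_zero]

lemma kappa2_mul_theta1 (hc : c ≠ 0) (hc2 : c ^ 2 < 2) (h₂ : kappa2 c p < 1) :
    kappa2 c p * ((1 - kappa2 c p ^ 2) / (kappa2 c p * √(2 - c ^ 2))) * theta1 c p = -1 := by
  have hκ₂ := kappa2_pos (p := p) hc
  have : 1 - kappa2 c p ^ 2 ≠ 0 := by nlinarith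
  have : √(2 - c ^ 2) ≠ 0 := (Real.sqrt_pos.2 (by linarith)).ne'
  rw [theta1_eq]
  field_simp [hκ₂.ne']

lemma kappa1_mul_theta2 (hc : c ≠ 0) (hc2 : c ^ 2 < 2) (hp₀ : 0 < p) (h₁ : kappa1 c p < 1) :
    kappa1 c p * ((1 - kappa1 c p ^ 2) / (kappa1 c p * √(2 - c ^ 2))) * theta2 c p = -1 := by
  have hκ₁ := kappa1_pos hc hp₀
  have : 1 - kappa1 c p ^ 2 ≠ 0 := by nlinarith
  have : √(2 - c ^ 2) ≠ 0 := (Real.sqrt_pos.2 (by linarith)).ne'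
  rw [theta2_eq hp₀.le]
  field_simp [hκ₁.ne']

lemma theta1_lt_theta2 (hc2 : c ^ 2 < 2) (hp₀ : 0 ≤ p) (h₁₂ : kappa1 c p < kappa2 c p)
    (h₂ : kappa2 c p < 1) : theta1 c p < theta2 c p := by
  have h₁ : 0 ≤ kappa1 c p := Real.sqrt_nonneg _
  rw [theta1_eq, theta2_eq hp₀, neg_div, neg_div, neg_lt_neg_iff]
  exact div_lt_div_of_pos_left (Real.sqrt_pos.2 (by linarith)) (by nlinarith) (by nlinarith)

lemma Lfun_arctan_arg_eq {α β s ξ c θ : ℝ} (hα : α ≠ 0) (hβ : β ≠ 0) (hs : s ≠ 0)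
    (hξ : ξ = α ^ 2 * β ^ 2) (hc : α ^ 2 + β ^ 2 = c ^ 2) :
    α * (-β ^ 2 + ξ + ξ * θ * s) / (ξ * (θ * β ^ 2 + s + θ * (1 - c ^ 2))) =
      (α * θ - (1 - α ^ 2) / (α * s)) / (1 + α * θ * ((1 - α ^ 2) / (α * s))) := by
  have hnum : α * (-β ^ 2 + ξ + ξ * θ * s) = (α * β ^ 2) * (α ^ 2 * s * θ - (1 - α ^ 2)) := by
    rw [hξ]; ring
  have hden :
      ξ * (θ * β ^ 2 + s + θ * (1 - c ^ 2)) = (α * β ^ 2) * (α * (s + (1 - α ^ 2) * θ)) := by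
    rw [hξ, ← hc]; ring
  rw [hnum, hden, mul_div_mul_left _ _ (by positivity), eq_comm,
    ← mul_div_mul_left _ _ (mul_ne_zero hα hs)]
  congr 1 <;> field_simp

lemma Lfun_eq_Lmodel (hc : c ≠ 0) (hc2 : c ^ 2 < 2) (hp₀ : 0 < p) (hp : p ≤ 1) :
    Lfun c p = Lmodel (kappa1 c p) (kappa2 c p)
      ((1 - kappa1 c p ^ 2) / (kappa1 c p * √(2 - c ^ 2)))
      ((1 - kappa2 c p ^ 2) / (kappa2 c p * √(2 - c ^ 2))) := by
  have h₁ := (kappa1_pos hc hp₀).ne'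
  have h₂ := (kappa2_pos (p := p) hc).ne'
  have hs : √(2 - c ^ 2) ≠ 0 := (Real.sqrt_pos.2 (by linarith)).ne'
  have hξ := xiPar_eq_kappa1_sq_mul_kappa2_sq (c := c) hp₀.le hp
  have hsum := kappa1_sq_add_kappa2_sq (c := c) hp₀.le
  ext θ
  rw [Lfun, Lmodel, Lfun_arctan_arg_eq h₂ h₁ hs (by rw [hξ]; ring) (by linarith),
    Lfun_arctan_arg_eq h₁ h₂ hs hξ hsum]

end Parameters

lemma natCast_sub_one_div_two_lt_ceil {k : ℕ} (hk : 1 ≤ k) :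
    (((k - 1) / 2 : ℕ) : ℤ) < ⌈(k : ℚ) / 2⌉ := by
  rw [Int.lt_ceil, Int.cast_natCast, lt_div_iff₀ two_pos]
  exact_mod_cast (by omega : (k - 1) / 2 * 2 < k)

/-- Lemma 3.1, reduced form: For `c ∈ (0,√2)`, `p ∈ (0,1)` with
`p > p₀`, and `k ∈ ℕ`, `k ≥ 1`, with `κ₂/κ₁ < k`, the set of `θ < θ₂`, `θ ≠ θ₁`, with
`L(c,p,θ)` a positive integer is finite with at most `2(⌈k/2⌉ − 1)` elements. -/
theorem stmt15 (c p : ℝ) (hc : c ∈ Set.Ioo 0 (Real.sqrt 2)) (hp : p ∈ Set.Ioo 0 1)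
    (hpp : p > p0 c) (k : ℕ) (hk : 1 ≤ k)
    (hκ : kappa2 c p / kappa1 c p < (k : ℝ)) :
    letI S : Set ℝ := {θ : ℝ | θ < theta2 c p ∧ θ ≠ theta1 c p ∧
      ∃ m : ℕ, 0 < m ∧ Lfun c p θ = (m : ℝ)}
    S.Finite ∧ (S.ncard : ℤ) ≤ 2 * (⌈(k : ℚ) / 2⌉ - 1) := by
  obtain ⟨hc₀, hc⟩ := hc
  obtain ⟨hp₀, hp₁⟩ := hp
  have hc2 : c ^ 2 < 2 := (Real.lt_sqrt hc₀.le).1 hc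
  have hs : 0 < √(2 - c ^ 2) := Real.sqrt_pos.2 (by linarith)
  have hκ₁ := kappa1_pos hc₀.ne' hp₀
  have hκ₂₀ := kappa2_pos (p := p) hc₀.ne'
  have hκ₁₂ := kappa1_lt_kappa2 hc₀.ne' hp₀.le hp₁
  have hκ₂ := kappa2_lt_one hc₀.ne' hc2 hp₁.le hpp
  rw [Lfun_eq_Lmodel hc₀.ne' hc2 hp₀ hp₁.le]
  obtain ⟨hfin, hcard⟩ := Lmodel_finite_and_ncard_le hκ₁ hκ₁₂
    (div_pos (by nlinarith) (mul_pos hκ₁ hs)) (div_pos (by nlinarith) (mul_pos hκ₂₀ hs))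
    (kappa2_mul_theta1 hc₀.ne' hc2 hκ₂) (kappa1_mul_theta2 hc₀.ne' hc2 hp₀ (hκ₁₂.trans hκ₂))
    (theta1_lt_theta2 hc2 hp₀.le hκ₁₂ hκ₂) k hκ (S := {θ | _}) fun θ hθ => hθ
  refine ⟨hfin, ?_⟩
  have := natCast_sub_one_div_two_lt_ceil hk
  omega
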